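/- In ℂ[x,y]³ with the coordinatewise Drury–Arveson norm, let f₁ = (x, 0, y) and f₂ = (0, x, y), and for each integer n ≥ 0 let h_n = (x yⁿ, −x yⁿ, 0). Then: (i) the only polynomials a, b ∈ ℂ[x,y] with a·f₁ + b·f₂ = h_n are a = yⁿ and b = −yⁿ; and (ii) there is no constant C such that ‖yⁿ·f₁‖² + ‖yⁿ·f₂‖² ≤ C‖h_n‖² for all n (indeed (‖yⁿ·f₁‖² + ‖yⁿ·f₂‖²)/‖h_n‖² = n + 2 for every n). In particular, {f₁, f₂} is not a stable generating set for the submodule of ℂ[x,y]³ it generates. -/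

import Mathlib

/-!
Since `x` is not a zero divisor, the first two coordinates of `a f₁ + b f₂ = h_n` force
`a = yⁿ` and `b = -yⁿ`. The Drury–Arveson norm of the monomial `xᵏ yˡ` is `k! l! / (k + l)!`,
so `‖x yⁿ‖² = 1/(n+1)` whereas `‖yⁿ⁺¹‖² = 1`: the forced coefficients create the term `yⁿ⁺¹`
in the third coordinate of `yⁿ f₁` and `yⁿ f₂`, which cancels in `h_n`. This makes
`‖yⁿ f₁‖² + ‖yⁿ f₂‖² = (n + 2) ‖h_n‖²`, and no constant can absorb the factor `n + 2`.
-/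

open scoped BigOperators
open MvPolynomial
noncomputable section

/-- The weight of the monomial `x^k y^l` in the Drury–Arveson norm on `ℂ[x,y]`:
`k! l!/(k+l)!`. -/
def wt (d : ℕ) (t : ℝ) (α : Fin d →₀ ℕ) : ℝ :=
  (∏ i, (Nat.factorial (α i) : ℝ)) /
    ∏ j ∈ Finset.range (∑ i, α i), ((d : ℝ) + t + (j + 1))

/-- The squared norm `‖f‖_t²` of a polynomial (distinct monomials orthogonal). -/
def tNormSq (d : ℕ) (t : ℝ) (f : MvPolynomial (Fin d) ℂ) : ℝ :=
  ∑ α ∈ f.support, ‖MvPolynomial.coeff α f‖ ^ 2 * wt d t α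

/-- The squared Drury–Arveson norm on `ℂ[x,y]³`:
`‖(h₁,h₂,h₃)‖² = ‖h₁‖² + ‖h₂‖² + ‖h₃‖²`. -/
def daNormVecSq (h : Fin 3 → MvPolynomial (Fin 2) ℂ) : ℝ :=
  ∑ i, tNormSq 2 (-2) (h i)

/-- The Drury–Arveson norm on `ℂ[x,y]³`. -/
def daNormVec (h : Fin 3 → MvPolynomial (Fin 2) ℂ) : ℝ :=
  Real.sqrt (daNormVecSq h)

open Finset Nat

section Weights

variable {d : ℕ} {t : ℝ}

theorem wt_eq_of_add_eq_zero (hdt : (d : ℝ) + t = 0) (α : Fin d →₀ ℕ) :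
    wt d t α = (∏ i, ((α i)! : ℝ)) / (∑ i, α i)! := by
  rw [wt, hdt, ← prod_range_add_one_eq_factorial, Nat.cast_prod]
  simp only [zero_add, Nat.cast_add, Nat.cast_one]

theorem tNormSq_monomial (α : Fin d →₀ ℕ) (c : ℂ) :
    tNormSq d t (monomial α c) = ‖c‖ ^ 2 * wt d t α := by
  by_cases hc : c = 0
  · simp [hc, tNormSq]
  · rw [tNormSq, support_monomial, if_neg hc, sum_singleton, coeff_monomial, if_pos rfl]

theorem tNormSq_neg (f : MvPolynomial (Fin d) ℂ) : tNormSq d t (-f) = tNormSq d t f := by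
  simp [tNormSq, support_neg]

theorem tNormSq_zero : tNormSq d t 0 = 0 := by
  simp [tNormSq]

end Weights

theorem tNormSq_X_zero_pow_mul_X_one_pow (k l : ℕ) :
    tNormSq 2 (-2) (X 0 ^ k * X 1 ^ l : MvPolynomial (Fin 2) ℂ) =
      (k ! * l ! : ℝ) / (k + l)! := by
  rw [X_pow_eq_monomial, X_pow_eq_monomial, monomial_mul, one_mul, tNormSq_monomial,
    wt_eq_of_add_eq_zero (by norm_num)]
  simp [Finsupp.single_apply]

theorem tNormSq_X_zero_mul_X_one_pow (n : ℕ) :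
    tNormSq 2 (-2) (X 0 * X 1 ^ n : MvPolynomial (Fin 2) ℂ) = 1 / (n + 1) := by
  have h := tNormSq_X_zero_pow_mul_X_one_pow 1 n
  rw [pow_one, add_comm 1 n] at h
  rw [h, factorial_one, factorial_succ n]
  have : (n ! : ℝ) ≠ 0 := by positivity
  push_cast
  field_simp

theorem tNormSq_X_one_pow (n : ℕ) : tNormSq 2 (-2) (X 1 ^ n : MvPolynomial (Fin 2) ℂ) = 1 := by
  have h := tNormSq_X_zero_pow_mul_X_one_pow 0 n
  rw [pow_zero, one_mul, zero_add] at h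
  rw [h]
  simp [factorial_ne_zero]

theorem daNormVecSq_vec3 (a b c : MvPolynomial (Fin 2) ℂ) :
    daNormVecSq ![a, b, c] = tNormSq 2 (-2) a + tNormSq 2 (-2) b + tNormSq 2 (-2) c := by
  simp [daNormVecSq, Fin.sum_univ_three]

theorem daNormVecSq_neg (v : Fin 3 → MvPolynomial (Fin 2) ℂ) :
    daNormVecSq (-v) = daNormVecSq v := by
  simp [daNormVecSq, tNormSq_neg]

section Example

/-! Here `f₁ = (x, 0, y)`, `f₂ = (0, x, y)` and `h_n = (x yⁿ, -x yⁿ, 0)`. -/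

local notation "x" => (X 0 : MvPolynomial (Fin 2) ℂ)
local notation "y" => (X 1 : MvPolynomial (Fin 2) ℂ)

theorem daNormVecSq_smul_f₁ (n : ℕ) : daNormVecSq (y ^ n • ![x, 0, y]) = 1 / (n + 1) + 1 := by
  simp only [Matrix.smul_vec3, smul_eq_mul, mul_zero]
  rw [daNormVecSq_vec3, mul_comm, ← pow_succ, tNormSq_X_zero_mul_X_one_pow, tNormSq_zero,
    tNormSq_X_one_pow, add_zero]

theorem daNormVecSq_smul_f₂ (n : ℕ) : daNormVecSq (y ^ n • ![0, x, y]) = 1 / (n + 1) + 1 := by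
  simp only [Matrix.smul_vec3, smul_eq_mul, mul_zero]
  rw [daNormVecSq_vec3, mul_comm, ← pow_succ, tNormSq_X_zero_mul_X_one_pow, tNormSq_zero,
    tNormSq_X_one_pow, zero_add]

theorem daNormVecSq_h_n (n : ℕ) : daNormVecSq ![x * y ^ n, -(x * y ^ n), 0] = 2 / (n + 1) := by
  rw [daNormVecSq_vec3, tNormSq_neg, tNormSq_X_zero_mul_X_one_pow, tNormSq_zero]
  ring

theorem eq_of_smul_add_smul_eq_h_n {n : ℕ} {a b : MvPolynomial (Fin 2) ℂ}
    (hab : a • ![x, 0, y] + b • ![0, x, y] = ![x * y ^ n, -(x * y ^ n), 0]) :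
    a = y ^ n ∧ b = -y ^ n := by
  have h₀ := congrFun hab 0
  have h₁ := congrFun hab 1
  simp only [Pi.add_apply, Pi.smul_apply, Matrix.cons_val_zero, Matrix.cons_val_one,
    smul_eq_mul, mul_zero, add_zero, zero_add] at h₀ h₁
  exact ⟨mul_left_cancel₀ (X_ne_zero 0) (by rw [← h₀, mul_comm]),
    mul_left_cancel₀ (X_ne_zero 0) (by rw [mul_comm, h₁, mul_neg])⟩

theorem h_n_eq_smul_add_smul (n : ℕ) :
    ![x * y ^ n, -(x * y ^ n), 0] = y ^ n • ![x, 0, y] + (-y ^ n) • ![0, x, y] := by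
  simp only [Matrix.smul_vec3, Matrix.vec3_add, smul_eq_mul]
  exact Matrix.vec3_eq (by ring) (by ring) (by ring)

theorem norm_ratio_eq_add_two (n : ℕ) :
    (daNormVecSq (y ^ n • ![x, 0, y]) + daNormVecSq (y ^ n • ![0, x, y])) /
      daNormVecSq ![x * y ^ n, -(x * y ^ n), 0] = n + 2 := by
  rw [daNormVecSq_smul_f₁, daNormVecSq_smul_f₂, daNormVecSq_h_n]
  field_simp
  ring

theorem not_exists_norm_ratio_bound :
    ¬ ∃ C : ℝ, ∀ n : ℕ, daNormVecSq (y ^ n • ![x, 0, y]) + daNormVecSq (y ^ n • ![0, x, y]) ≤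
      C * daNormVecSq ![x * y ^ n, -(x * y ^ n), 0] := by
  rintro ⟨C, hC⟩
  have hle : (⌈C⌉₊ : ℝ) + 2 ≤ C := by
    rw [← norm_ratio_eq_add_two, div_le_iff₀ (by rw [daNormVecSq_h_n]; positivity)]
    exact hC _
  linarith [Nat.le_ceil C]

theorem sq_daNormVec_smul_add_daNormVec_smul (n : ℕ) :
    (daNormVec (y ^ n • ![x, 0, y]) + daNormVec ((-y ^ n) • ![0, x, y])) ^ 2 =
      2 * (n + 2) * daNormVec ![x * y ^ n, -(x * y ^ n), 0] ^ 2 := by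
  rw [neg_smul, daNormVec, daNormVec, daNormVec, daNormVecSq_neg, daNormVecSq_smul_f₁,
    daNormVecSq_smul_f₂, daNormVecSq_h_n, ← two_mul, mul_pow, Real.sq_sqrt (by positivity),
    Real.sq_sqrt (by positivity)]
  field_simp
  ring

theorem not_stable_generating_f₁_f₂ :
    ¬ ∃ A : ℝ, ∀ g ∈ Submodule.span (MvPolynomial (Fin 2) ℂ) {![x, 0, y], ![0, x, y]},
      ∃ g₁ g₂ : MvPolynomial (Fin 2) ℂ, g = g₁ • ![x, 0, y] + g₂ • ![0, x, y] ∧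
        daNormVec (g₁ • ![x, 0, y]) + daNormVec (g₂ • ![0, x, y]) ≤ A * daNormVec g := by
  rintro ⟨A, hA⟩
  set n := ⌈A ^ 2⌉₊
  have hmem : ![x * y ^ n, -(x * y ^ n), 0] ∈
      Submodule.span (MvPolynomial (Fin 2) ℂ) {![x, 0, y], ![0, x, y]} := by
    rw [h_n_eq_smul_add_smul]
    exact add_mem (Submodule.smul_mem _ _ (Submodule.subset_span (by simp)))
      (Submodule.smul_mem _ _ (Submodule.subset_span (by simp)))
  obtain ⟨g₁, g₂, hg, hle⟩ := hA _ hmem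
  obtain ⟨rfl, rfl⟩ := eq_of_smul_add_smul_eq_h_n hg.symm
  have hpos : 0 < daNormVec ![x * y ^ n, -(x * y ^ n), 0] :=
    Real.sqrt_pos.2 (by rw [daNormVecSq_h_n]; positivity)
  have hsq : 2 * (n + 2) * daNormVec ![x * y ^ n, -(x * y ^ n), 0] ^ 2 ≤
      A ^ 2 * daNormVec ![x * y ^ n, -(x * y ^ n), 0] ^ 2 := by
    rw [← sq_daNormVec_smul_add_daNormVec_smul, ← mul_pow]
    exact pow_le_pow_left₀ (add_nonneg (Real.sqrt_nonneg _) (Real.sqrt_nonneg _)) hle 2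
  have hA2 := le_of_mul_le_mul_right hsq (by positivity)
  linarith [Nat.le_ceil (A ^ 2)]

end Example

/-- In `ℂ[x,y]³`, let `f₁ = (x,0,y)`, `f₂ = (0,x,y)` and, for
`n ≥ 0`, `h_n = (xyⁿ, −xyⁿ, 0)`.  Then (i) the only way of writing
`h_n = a f₁ + b f₂` is `a = yⁿ`, `b = −yⁿ`; (ii) the quotient
`(‖yⁿf₁‖² + ‖yⁿf₂‖²)/‖h_n‖²` equals `n + 2`, so there is no constant `C` with
`‖yⁿf₁‖² + ‖yⁿf₂‖² ≤ C‖h_n‖²` for all `n`.  In particular `{f₁, f₂}` is not a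
stable generating set for the submodule it generates. -/
theorem stmt_18
    (f₁ f₂ : Fin 3 → MvPolynomial (Fin 2) ℂ)
    (hf₁ : f₁ = ![X 0, 0, X 1])
    (hf₂ : f₂ = ![0, X 0, X 1])
    (h : ℕ → (Fin 3 → MvPolynomial (Fin 2) ℂ))
    (hh : ∀ n, h n = ![X 0 * X 1 ^ n, -(X 0 * X 1 ^ n), 0]) :
    -- (i) uniqueness of the coefficients:
    (∀ (n : ℕ) (a b : MvPolynomial (Fin 2) ℂ),
      a • f₁ + b • f₂ = h n → a = X 1 ^ n ∧ b = -(X 1 ^ n)) ∧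
    -- (ii) the ratio equals `n + 2` …
    (∀ n : ℕ,
      (daNormVecSq ((X 1 ^ n : MvPolynomial (Fin 2) ℂ) • f₁) +
        daNormVecSq ((X 1 ^ n : MvPolynomial (Fin 2) ℂ) • f₂)) / daNormVecSq (h n)
        = (n : ℝ) + 2) ∧
    -- … so no constant `C` works:
    (¬ ∃ C : ℝ, ∀ n : ℕ,
      daNormVecSq ((X 1 ^ n : MvPolynomial (Fin 2) ℂ) • f₁) +
        daNormVecSq ((X 1 ^ n : MvPolynomial (Fin 2) ℂ) • f₂)
        ≤ C * daNormVecSq (h n)) ∧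
    -- in particular `{f₁, f₂}` is not a stable generating set:
    ¬ ∃ A : ℝ, ∀ g ∈ Submodule.span (MvPolynomial (Fin 2) ℂ) {f₁, f₂},
      ∃ g₁ g₂ : MvPolynomial (Fin 2) ℂ,
        g = g₁ • f₁ + g₂ • f₂ ∧
        daNormVec (g₁ • f₁) + daNormVec (g₂ • f₂) ≤ A * daNormVec g := by
  obtain rfl : h = fun n => ![X 0 * X 1 ^ n, -(X 0 * X 1 ^ n), 0] := funext hh
  subst hf₁ hf₂
  exact ⟨fun _ _ _ => eq_of_smul_add_smul_eq_h_n, norm_ratio_eq_add_two,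
    not_exists_norm_ratio_bound, not_stable_generating_f₁_f₂⟩
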